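/- arXiv:2510.07246 — 3 statements merged into one kernel-verified Lean document; each statement's English description precedes it below -/
import Mathlib

section
/- There is a constant K > 0 such that for every n that is a power of two, Multiplex_n can be implemented exactly by a unitary Clifford+Magic circuit acting on the ⌈log₂ n⌉ + n + 1 input qubits together with ancilla qubits initialized in |0⟩ and returned to |0⟩, in which every magic gate acts on at most 3 qubits and the total number of magic gates is at most K·n; that is, M^unitary_{0,3}(Multiplex_n) = O(n). -/
open Matrix BigOperators

attribute [local instance] Classical.propDecidable

namespace MagicComm

variable {ι : Type} [Fintype ι] [DecidableEq ι]

/-- Square matrices indexed by computational-basis states of qubits labelled by `ι`. -/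
abbrev QMat (ι : Type) [Fintype ι] [DecidableEq ι] : Type :=
  Matrix (ι → Bool) (ι → Bool) ℂ

/-- The Pauli operator `X^u · Z^w`, sending `|t⟩` to `(-1)^{w·t} |t ⊕ u⟩`. -/
noncomputable def pauliXZ (u w : ι → Bool) : QMat ι := fun s t =>
  if s = (fun i => xor (t i) (u i)) then
    (-1 : ℂ) ^ (Finset.univ.filter fun i => w i = true ∧ t i = true).card
  else 0

/-- An `ι`-qubit Pauli operator: a fourth root of unity times `X^u Z^w`. -/
def IsPauli (P : QMat ι) : Prop :=
  ∃ (α : ℂ) (u w : ι → Bool),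
    (α = 1 ∨ α = -1 ∨ α = Complex.I ∨ α = -Complex.I) ∧ P = α • pauliXZ u w

/-- A Clifford unitary: a unitary conjugating every Pauli operator to a Pauli operator. -/
def IsClifford (C : QMat ι) : Prop :=
  C ∈ Matrix.unitaryGroup (ι → Bool) ℂ ∧ ∀ P : QMat ι, IsPauli P → IsPauli (C * P * Cᴴ)

noncomputable def extendOn (S : Finset ι)
    (V : Matrix ({i : ι // i ∈ S} → Bool) ({i : ι // i ∈ S} → Bool) ℂ) : QMat ι := fun s t =>
  if ∀ i ∉ S, s i = t i then V (fun i => s i.1) (fun i => t i.1) else 0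

/-- `U` acts (at most) on the qubits in `S`. -/
def ActsOn (U : QMat ι) (S : Finset ι) : Prop := ∃ V, U = extendOn S V

/-- A gate of a circuit: a matrix tagged according to whether it counts as a magic gate. -/
structure Gate (ι : Type) [Fintype ι] [DecidableEq ι] : Type where
  mat : QMat ι
  isMagic : Bool

/-- A valid gate of a Clifford+Magic circuit: untagged gates must be Clifford, while
tagged (magic) gates may be arbitrary unitaries of weight at most `cM`. -/
def Gate.Valid (cM : ℕ) (g : Gate ι) : Prop :=
  if g.isMagic then
    g.mat ∈ Matrix.unitaryGroup (ι → Bool) ℂ ∧ ∃ S : Finset ι, S.card ≤ cM ∧ ActsOn g.mat S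
  else IsClifford g.mat

/-- The overall unitary implemented by a circuit (a list of gates). -/
noncomputable def circUnitary (gates : List (Gate ι)) : QMat ι := (gates.map Gate.mat).prod

/-- The number of magic gates of a circuit. -/
def magicCount (gates : List (Gate ι)) : ℕ := (gates.filter fun g => g.isMagic).length

/-- Probability that measuring qubit `i0` of the (pure) state `φ` in the computational
basis yields outcome `b`. -/
noncomputable def measProb (φ : (ι → Bool) → ℂ) (i0 : ι) (b : Bool) : ℝ :=
  ∑ s : ι → Bool, if s i0 = b then Complex.normSq (φ s) else 0

/-- The state `|x⟩ ⊗ |ψ⟩` on an input register of `N` qubits and an advice register of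
`a` qubits. -/
noncomputable def inputState {N a : ℕ} (x : Fin N → Bool) (ψ : (Fin a → Bool) → ℂ) :
    ((Fin N ⊕ Fin a) → Bool) → ℂ := fun s =>
  if (fun i => s (Sum.inl i)) = x then ψ (fun j => s (Sum.inr j)) else 0

/-- `ψ` is a unit vector. -/
def Normalized {a : ℕ} (ψ : (Fin a → Bool) → ℂ) : Prop :=
  ∑ v : Fin a → Bool, Complex.normSq (ψ v) = 1

/-- The qubits of the `n`-qubit quantum multiplexer: a `⌈log₂ n⌉`-qubit index register,
an `n`-qubit array register, and one target qubit. -/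
abbrev MIdx (n : ℕ) : Type := Fin (Nat.clog 2 n) ⊕ (Fin n ⊕ Fin 1)

/-- The value (written in binary, little-endian) of the index register. -/
def mplexVal {n : ℕ} (s : (MIdx n) → Bool) : ℕ :=
  ∑ j : Fin (Nat.clog 2 n), if s (Sum.inl j) then 2 ^ (j : ℕ) else 0

/-- The action of the quantum multiplexer on computational basis states: controlled on
the index register holding (the binary representation of) `i`, swap the `i`-th array
qubit with the target qubit (and do nothing when the index register holds a value
outside the range of the array). -/
def mplexFun {n : ℕ} (t : (MIdx n) → Bool) : (MIdx n) → Bool :=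
  if h : mplexVal t < n then
    fun j => match j with
      | Sum.inl j => t (Sum.inl j)
      | Sum.inr (Sum.inl p) =>
          if p = (⟨mplexVal t, h⟩ : Fin n) then t (Sum.inr (Sum.inr 0))
          else t (Sum.inr (Sum.inl p))
      | Sum.inr (Sum.inr _) => t (Sum.inr (Sum.inl (⟨mplexVal t, h⟩ : Fin n)))
  else t

/-- The `n`-qubit quantum multiplexer `Multiplex_n`, a unitary on `⌈log₂ n⌉ + n + 1`
qubits. -/
noncomputable def multiplexMat (n : ℕ) : QMat (MIdx n) := fun s t =>
  if s = mplexFun t then 1 else 0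

/-- Embed a state of the system qubits `ι` into system plus `a` ancilla qubits in `|0⟩`. -/
noncomputable def withZeroAncilla {ι : Type} [Fintype ι] [DecidableEq ι] {a : ℕ}
    (φ : (ι → Bool) → ℂ) : ((ι ⊕ Fin a) → Bool) → ℂ := fun s =>
  if ∀ j : Fin a, s (Sum.inr j) = false then φ (fun i => s (Sum.inl i)) else 0

/-- The circuit `gates` (acting on the system plus `a` ancilla qubits initialized in
`|0⟩`) implements `U` exactly, returning the ancillas to `|0⟩`. -/
def ImplementsExactly {ι : Type} [Fintype ι] [DecidableEq ι] {a : ℕ}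
    (gates : List (Gate (ι ⊕ Fin a))) (U : QMat ι) : Prop :=
  ∀ φ : (ι → Bool) → ℂ,
    (circUnitary gates).mulVec (withZeroAncilla φ) = withZeroAncilla (U.mulVec φ)

/-!
Index the array by the binary digits `v : Fin k → Bool` of positions. Conditioned on the first
index bit, `2 ^ (k - 1)` Fredkin gates exchange the halves `0 :: v` and `1 :: v` of the array;
doing this before and after the multiplexer on the first half (with the remaining index bits)
gives the multiplexer on the whole array. Every gate permutes wires under the control of index
bits that no gate moves, so a circuit acts as `s ↦ s ∘ ρ` with a wire permutation `ρ` depending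
only on the index, and conjugating the inner swap `arr (0 :: v) ↔ tgt` by the exchange of halves
gives `arr (1 :: v) ↔ tgt`. The gate count obeys `T (k + 1) = T k + 2 ^ (k + 1)`, `T 0 = 1`, so
`T k = 2 n - 1` for `n = 2 ^ k`; no ancillas are needed.
-/

open Equiv Function

/-- The matrix of the map `|t⟩ ↦ |f t⟩` of basis states; `multiplexMat n = permMat mplexFun`
by definition. -/
noncomputable def permMat (f : (ι → Bool) → ι → Bool) : QMat ι :=
  fun s t => if s = f t then 1 else 0

lemma permMat_mul (f g : (ι → Bool) → ι → Bool) :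
    permMat f * permMat g = permMat (f ∘ g) := by
  ext s t
  rw [Matrix.mul_apply, Finset.sum_eq_single (g t)]
  · simp [permMat]
  · intro u _ hu
    simp [permMat, hu]
  · simp

lemma permMat_id : permMat (ι := ι) id = 1 := by
  ext s t
  simp [permMat, Matrix.one_apply]

lemma permMat_mulVec {f : (ι → Bool) → ι → Bool} (hf : Involutive f)
    (v : (ι → Bool) → ℂ) : permMat f *ᵥ v = v ∘ f := by
  ext s
  simp [permMat, Matrix.mulVec, dotProduct, eq_comm (a := s), hf.eq_iff]

lemma conjTranspose_permMat {f : (ι → Bool) → ι → Bool} (hf : Involutive f) :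
    (permMat f)ᴴ = permMat f := by
  ext s t
  simp [permMat, eq_comm (a := s), hf.eq_iff]

lemma permMat_mem_unitaryGroup {f : (ι → Bool) → ι → Bool} (hf : Involutive f) :
    permMat f ∈ Matrix.unitaryGroup (ι → Bool) ℂ := by
  rw [Matrix.mem_unitaryGroup_iff, Matrix.star_eq_conjTranspose, conjTranspose_permMat hf,
    permMat_mul, hf.comp_self, permMat_id]

section Wires

variable {α : Type*} [DecidableEq α]

def ActsOnWires (f : (α → Bool) → α → Bool) (S : Finset α) : Prop :=
  (∀ s, ∀ x ∉ S, f s x = s x) ∧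
    ∀ s t, (∀ y ∈ S, s y = t y) → ∀ x ∈ S, f s x = f t x

def IsLocalInvolution (cM : ℕ) (f : (α → Bool) → α → Bool) : Prop :=
  Involutive f ∧ ∃ S : Finset α, S.card ≤ cM ∧ ActsOnWires f S

end Wires

lemma actsOn_permMat {f : (ι → Bool) → ι → Bool} {S : Finset ι} (hf : ActsOnWires f S) :
    ActsOn (permMat f) S := by
  obtain ⟨hout, hin⟩ := hf
  let extend : ({i // i ∈ S} → Bool) → ι → Bool :=
    fun σ x => if h : x ∈ S then σ ⟨x, h⟩ else false
  refine ⟨permMat fun σ (y : {i // i ∈ S}) => f (extend σ) y, ?_⟩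
  have hext : ∀ t : ι → Bool, ∀ x ∈ S, f (extend fun y => t y) x = f t x :=
    fun t => hin _ _ fun y hy => by simp [extend, hy]
  ext s t
  have key : s = f t ↔ (∀ x ∉ S, s x = t x) ∧
      (fun y : {i // i ∈ S} => s y) = fun y : {i // i ∈ S} => f (extend fun y => t y) y := by
    constructor
    · rintro rfl
      exact ⟨hout t, funext fun y => (hext t y y.2).symm⟩
    · rintro ⟨h₁, h₂⟩
      funext x
      by_cases hx : x ∈ S
      · rw [congrFun h₂ ⟨x, hx⟩, hext t x hx]
      · rw [hout t x hx, h₁ x hx]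
  simp only [permMat, extendOn, key]
  by_cases h₁ : ∀ x ∉ S, s x = t x
  · rw [if_pos h₁]
    exact if_congr (and_iff_right h₁) rfl rfl
  · rw [if_neg h₁, if_neg fun h => h₁ h.1]

/-- Every reversible gate is counted as magic, even a Clifford one such as a swap. -/
noncomputable def Gate.ofFun (f : (ι → Bool) → ι → Bool) : Gate ι := ⟨permMat f, true⟩

lemma Gate.valid_ofFun {cM : ℕ} {f : (ι → Bool) → ι → Bool}
    (hf : IsLocalInvolution cM f) : (Gate.ofFun f).Valid cM := by
  obtain ⟨hinv, S, hS, hloc⟩ := hf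
  simp only [Gate.Valid, Gate.ofFun, if_true]
  exact ⟨permMat_mem_unitaryGroup hinv, S, hS, actsOn_permMat hloc⟩

section Compose

variable {β : Type*}

/-- Composition of a list of maps, the head applied last, like a product of matrices. -/
def composeAll (l : List (β → β)) : β → β := l.foldr (· ∘ ·) id

@[simp]
lemma composeAll_nil : composeAll ([] : List (β → β)) = id := rfl

@[simp]
lemma composeAll_cons (f : β → β) (l : List (β → β)) :
    composeAll (f :: l) = f ∘ composeAll l := rfl

lemma composeAll_append (l₁ l₂ : List (β → β)) :
    composeAll (l₁ ++ l₂) = composeAll l₁ ∘ composeAll l₂ := by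
  induction l₁ with
  | nil => rfl
  | cons f l ih => simp [ih, Function.comp_assoc]

end Compose

lemma circUnitary_map_ofFun (l : List ((ι → Bool) → ι → Bool)) :
    circUnitary (l.map Gate.ofFun) = permMat (composeAll l) := by
  induction l with
  | nil => exact permMat_id.symm
  | cons f l ih =>
    simp only [circUnitary, List.map_cons, List.prod_cons] at ih ⊢
    rw [ih, composeAll_cons, ← permMat_mul]
    rfl

lemma magicCount_map_ofFun (l : List ((ι → Bool) → ι → Bool)) :
    magicCount (l.map Gate.ofFun) = l.length := by
  simp [magicCount, List.filter_map, Function.comp_def, Gate.ofFun]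

lemma implementsExactly_of_circUnitary_eq {a : ℕ} {gates : List (Gate (ι ⊕ Fin a))}
    {G : (ι → Bool) → ι → Bool} (hG : Involutive G)
    (h : circUnitary gates = permMat fun s => Sum.elim (G (s ∘ Sum.inl)) (s ∘ Sum.inr)) :
    ImplementsExactly gates (permMat G) := by
  have hF : Involutive fun s : ι ⊕ Fin a → Bool =>
      Sum.elim (G (s ∘ Sum.inl)) (s ∘ Sum.inr) := by
    intro s
    simp [Sum.elim_comp_inl, Sum.elim_comp_inr, hG (s ∘ Sum.inl)]
  intro φ
  rw [h, permMat_mulVec hF, permMat_mulVec hG]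
  rfl

section Reversible

variable {α β : Type*} [DecidableEq α]

lemma swap_apply_mem {a b x : α} {S : Finset α} (ha : a ∈ S) (hb : b ∈ S) (hx : x ∈ S) :
    swap a b x ∈ S := by
  rw [swap_apply_def]
  split_ifs <;> assumption

lemma isLocalInvolution_comp_swap (a b : α) : IsLocalInvolution 3 (· ∘ swap a b) := by
  refine ⟨fun s => funext fun x => by simp, {a, b}, Finset.card_le_two.trans (by norm_num),
    fun s x hx => ?_, fun s t hst x hx => ?_⟩
  · simp only [Finset.mem_insert, Finset.mem_singleton, not_or] at hx
    simp [swap_apply_of_ne_of_ne hx.1 hx.2]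
  · exact hst _ (swap_apply_mem (by simp) (by simp) hx)

def cswap (c a b : α) (s : α → Bool) : α → Bool := if s c then s ∘ swap a b else s

lemma isLocalInvolution_cswap {c a b : α} (ha : c ≠ a) (hb : c ≠ b) :
    IsLocalInvolution 3 (cswap c a b) := by
  have hc : swap a b c = c := swap_apply_of_ne_of_ne ha hb
  refine ⟨fun s => ?_, {c, a, b}, Finset.card_le_three, fun s x hx => ?_,
    fun s t hst x hx => ?_⟩
  · by_cases h : s c <;> funext x <;> simp [cswap, h, hc]
  · simp only [Finset.mem_insert, Finset.mem_singleton, not_or] at hx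
    by_cases h : s c <;> simp [cswap, h, swap_apply_of_ne_of_ne hx.2.1 hx.2.2]
  · simp only [cswap, hst c (by simp)]
    split_ifs
    · exact hst _ (swap_apply_mem (by simp) (by simp) hx)
    · exact hst x hx

lemma prod_map_swap_apply_of_forall_ne {f g : β → α} {w : α} (l : List β)
    (hf : ∀ x ∈ l, w ≠ f x) (hg : ∀ x ∈ l, w ≠ g x) :
    (l.map fun x => swap (f x) (g x)).prod w = w := by
  induction l with
  | nil => rfl
  | cons y l ih =>
    simp only [List.mem_cons, forall_eq_or_imp] at hf hg
    rw [List.map_cons, List.prod_cons, Perm.mul_apply, ih hf.2 hg.2,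
      swap_apply_of_ne_of_ne hf.1 hg.1]

lemma prod_map_swap_apply_left {f g : β → α} (hf : Injective f) (hg : Injective g)
    (hfg : ∀ x y, f x ≠ g y) {l : List β} (hl : l.Nodup) {x : β} (hx : x ∈ l) :
    (l.map fun y => swap (f y) (g y)).prod (f x) = g x := by
  induction l with
  | nil => simp at hx
  | cons y l ih =>
    rw [List.nodup_cons] at hl
    rw [List.map_cons, List.prod_cons, Perm.mul_apply]
    obtain rfl | hx := List.mem_cons.mp hx
    · rw [prod_map_swap_apply_of_forall_ne l
        (fun z hz => hf.ne (ne_of_mem_of_not_mem hz hl.1).symm) (fun z _ => hfg _ _),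
        swap_apply_left]
    · rw [ih hl.2 hx, swap_apply_of_ne_of_ne (hfg y x).symm (hg.ne (ne_of_mem_of_not_mem hx hl.1))]

def cswapLayer (c : α) (f g : β → α) (l : List β) : List ((α → Bool) → α → Bool) :=
  l.map fun x => cswap c (f x) (g x)

lemma composeAll_cswapLayer {c : α} {f g : β → α} (l : List β) (hf : ∀ x ∈ l, c ≠ f x)
    (hg : ∀ x ∈ l, c ≠ g x) (s : α → Bool) :
    composeAll (cswapLayer c f g l) s =
      if s c then s ∘ ⇑(l.map fun x => swap (f x) (g x)).reverse.prod else s := by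
  induction l with
  | nil => simp [cswapLayer]
  | cons y l ih =>
    simp only [List.mem_cons, forall_eq_or_imp] at hf hg
    have hfix : (l.map fun x => swap (f x) (g x)).reverse.prod c = c := by
      rw [← List.map_reverse]
      exact prod_map_swap_apply_of_forall_ne _ (by simpa using hf.2) (by simpa using hg.2)
    simp only [cswapLayer, List.map_cons, composeAll_cons, Function.comp_apply] at ih ⊢
    rw [ih hf.2 hg.2]
    by_cases hs : s c
    · simp [cswap, hs, hfix, Function.comp_assoc]
    · simp [cswap, hs]

end Reversible

section Multiplexer

variable {α : Type*} [DecidableEq α] {k : ℕ}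

def muxFun (ctrl : Fin k → α) (arr : (Fin k → Bool) → α) (tgt : α) (s : α → Bool) :
    α → Bool :=
  s ∘ swap (arr fun j => s (ctrl j)) tgt

lemma muxFun_involutive {ctrl : Fin k → α} {arr : (Fin k → Bool) → α} {tgt : α}
    (hca : ∀ j v, ctrl j ≠ arr v) (hct : ∀ j, ctrl j ≠ tgt) :
    Involutive (muxFun ctrl arr tgt) := by
  intro s
  have hbits : (fun j => muxFun ctrl arr tgt s (ctrl j)) = fun j => s (ctrl j) :=
    funext fun j => by simp [muxFun, swap_apply_of_ne_of_ne (hca _ _) (hct j)]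
  rw [muxFun, hbits]
  funext x
  simp [muxFun]

noncomputable def halvesLayer (c : α) (arr : (Fin (k + 1) → Bool) → α) :
    List ((α → Bool) → α → Bool) :=
  cswapLayer c (arr ∘ vecCons false) (arr ∘ vecCons true) Finset.univ.toList

noncomputable def halvesSwap (arr : (Fin (k + 1) → Bool) → α) : Perm α :=
  ((Finset.univ : Finset (Fin k → Bool)).toList.map fun v =>
    swap (arr (vecCons false v)) (arr (vecCons true v))).prod

lemma halvesSwap_apply_of_forall_ne {arr : (Fin (k + 1) → Bool) → α} {w : α}
    (hw : ∀ v, w ≠ arr v) : halvesSwap arr w = w :=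
  prod_map_swap_apply_of_forall_ne _ (fun _ _ => hw _) (fun _ _ => hw _)

lemma halvesSwap_apply_false {arr : (Fin (k + 1) → Bool) → α} (harr : Injective arr)
    (v : Fin k → Bool) : halvesSwap arr (arr (vecCons false v)) = arr (vecCons true v) := by
  have hcons (b : Bool) : Injective (vecCons b : (Fin k → Bool) → Fin (k + 1) → Bool) :=
    fun _ _ h => (vecCons_inj.mp h).2
  exact prod_map_swap_apply_left (harr.comp (hcons false)) (harr.comp (hcons true))
    (fun _ _ h => by simpa using harr h) (Finset.nodup_toList _) (Finset.mem_toList.mpr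
    (Finset.mem_univ v))

lemma composeAll_halvesLayer_reverse {c : α} {arr : (Fin (k + 1) → Bool) → α}
    (hc : ∀ v, c ≠ arr v) (s : α → Bool) :
    composeAll (halvesLayer c arr).reverse s = if s c then s ∘ halvesSwap arr else s := by
  rw [halvesLayer, cswapLayer, ← List.map_reverse, ← cswapLayer,
    composeAll_cswapLayer (f := arr ∘ vecCons false) (g := arr ∘ vecCons true) _
      (fun _ _ => hc _) (fun _ _ => hc _), List.map_reverse,
    List.reverse_reverse]
  rfl

lemma composeAll_halvesLayer {c : α} {arr : (Fin (k + 1) → Bool) → α}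
    (hc : ∀ v, c ≠ arr v) (s : α → Bool) :
    composeAll (halvesLayer c arr) s = if s c then s ∘ ⇑(halvesSwap arr)⁻¹ else s := by
  rw [halvesLayer, composeAll_cswapLayer (f := arr ∘ vecCons false) (g := arr ∘ vecCons true) _
    (fun _ _ => hc _) (fun _ _ => hc _), halvesSwap,
    List.prod_inv_reverse]
  simp [Function.comp_def, swap_inv]

noncomputable def muxGates : {k : ℕ} → (Fin k → α) → ((Fin k → Bool) → α) → α →
    List ((α → Bool) → α → Bool)
  | 0, _, arr, tgt => [(· ∘ swap (arr ![]) tgt)]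
  | _ + 1, ctrl, arr, tgt =>
    halvesLayer (ctrl 0) arr ++ muxGates (ctrl ∘ Fin.succ) (arr ∘ vecCons false) tgt ++
      (halvesLayer (ctrl 0) arr).reverse

lemma composeAll_muxGates {ctrl : Fin k → α} {arr : (Fin k → Bool) → α} {tgt : α}
    (hca : ∀ j v, ctrl j ≠ arr v) (hct : ∀ j, ctrl j ≠ tgt) (harr : Injective arr)
    (hat : ∀ v, arr v ≠ tgt) :
    composeAll (muxGates ctrl arr tgt) = muxFun ctrl arr tgt := by
  induction k with
  | zero =>
    funext s
    simp [muxGates, muxFun, Subsingleton.elim (fun j => s (ctrl j)) ![]]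
  | succ k ih =>
    have hsub := ih (ctrl := ctrl ∘ Fin.succ) (arr := arr ∘ vecCons false) (fun _ _ => hca _ _)
      (fun _ => hct _) (harr.comp fun _ _ h => (vecCons_inj.mp h).2) (fun _ => hat _)
    funext s
    have hβc (j) : halvesSwap arr (ctrl j) = ctrl j := halvesSwap_apply_of_forall_ne (hca j)
    have hβt : halvesSwap arr tgt = tgt := halvesSwap_apply_of_forall_ne fun v => (hat v).symm
    have hσc : swap (arr (vecCons false fun j => s (ctrl j.succ))) tgt (ctrl 0) = ctrl 0 :=
      swap_apply_of_ne_of_ne (hca _ _) (hct _)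
    have hbits : vecCons (s (ctrl 0)) (fun j => s (ctrl j.succ)) = fun j => s (ctrl j) :=
      Matrix.cons_head_tail fun j => s (ctrl j)
    simp only [muxGates, composeAll_append, Function.comp_apply, hsub]
    rw [composeAll_halvesLayer_reverse (hca 0), composeAll_halvesLayer (hca 0)]
    cases h0 : s (ctrl 0)
    · rw [h0] at hbits
      rw [hbits] at hσc
      simp only [muxFun, Function.comp_apply, hbits, hσc, h0, Bool.false_eq_true, if_false]
    · rw [h0] at hbits
      have hconj : halvesSwap arr * swap (arr (vecCons false fun j => s (ctrl j.succ))) tgt *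
          (halvesSwap arr)⁻¹ = swap (arr fun j => s (ctrl j)) tgt := by
        rw [← swap_apply_apply, halvesSwap_apply_false harr, hβt, hbits]
      simp only [muxFun, Function.comp_apply, hβc, hσc, h0, if_true]
      rw [← hconj]
      rfl

lemma length_muxGates (ctrl : Fin k → α) (arr : (Fin k → Bool) → α) (tgt : α) :
    (muxGates ctrl arr tgt).length + 1 = 2 ^ (k + 1) := by
  induction k with
  | zero => rfl
  | succ k ih =>
    have hlayer : (halvesLayer (ctrl 0) arr).length = 2 ^ k := by
      simp [halvesLayer, cswapLayer]
    have := ih (ctrl ∘ Fin.succ) (arr ∘ vecCons false)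
    simp only [muxGates, List.length_append, List.length_reverse, hlayer]
    rw [pow_succ] at this ⊢
    omega

lemma isLocalInvolution_of_mem_muxGates {ctrl : Fin k → α} {arr : (Fin k → Bool) → α}
    {tgt : α} (hca : ∀ j v, ctrl j ≠ arr v) :
    ∀ f ∈ muxGates ctrl arr tgt, IsLocalInvolution 3 f := by
  induction k with
  | zero =>
    intro f hf
    rw [muxGates, List.mem_singleton] at hf
    exact hf ▸ isLocalInvolution_comp_swap _ _
  | succ k ih =>
    have hlayer : ∀ f ∈ halvesLayer (ctrl 0) arr, IsLocalInvolution 3 f := by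
      simp only [halvesLayer, cswapLayer, List.mem_map]
      rintro f ⟨v, -, rfl⟩
      exact isLocalInvolution_cswap (hca _ _) (hca _ _)
    intro f hf
    simp only [muxGates, List.mem_append, List.mem_reverse] at hf
    obtain (hf | hf) | hf := hf
    · exact hlayer f hf
    · exact ih (fun _ _ => hca _ _) f hf
    · exact hlayer f hf

lemma muxFun_sumInl {γ : Type*} [DecidableEq γ] (ctrl : Fin k → α)
    (arr : (Fin k → Bool) → α) (tgt : α) (s : α ⊕ γ → Bool) :
    muxFun (Sum.inl ∘ ctrl) (Sum.inl ∘ arr) (Sum.inl tgt) s =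
      Sum.elim (muxFun ctrl arr tgt (s ∘ Sum.inl)) (s ∘ Sum.inr) := by
  funext x
  rcases x with x | x
  · simp [muxFun, Sum.inl_injective.swap_apply]
  · simp [muxFun, swap_apply_of_ne_of_ne]

end Multiplexer

section MultiplexMat

variable {n : ℕ}

def binaryIndex (hn : 2 ^ Nat.clog 2 n = n) (v : Fin (Nat.clog 2 n) → Bool) : Fin n :=
  finCongr hn (finFunctionFinEquiv (finTwoEquiv.symm ∘ v))

lemma binaryIndex_injective (hn : 2 ^ Nat.clog 2 n = n) : Injective (binaryIndex hn) :=
  (finCongr hn).injective.comp <| finFunctionFinEquiv.injective.comp <|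
    finTwoEquiv.symm.injective.comp_left

lemma val_binaryIndex (hn : 2 ^ Nat.clog 2 n = n) (t : MIdx n → Bool) :
    (binaryIndex hn fun j => t (Sum.inl j) : ℕ) = mplexVal t := by
  simp only [binaryIndex, finCongr_apply, Fin.val_cast, finFunctionFinEquiv_apply, mplexVal]
  refine Finset.sum_congr rfl fun j _ => ?_
  cases h : t (Sum.inl j) <;> simp [h, finTwoEquiv]

lemma mplexFun_eq_muxFun (hn : 2 ^ Nat.clog 2 n = n) :
    mplexFun (n := n) =
      muxFun Sum.inl (fun v => Sum.inr (Sum.inl (binaryIndex hn v))) (Sum.inr (Sum.inr 0)) := by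
  funext t
  have hv : mplexVal t < n := val_binaryIndex hn t ▸ (binaryIndex hn _).isLt
  have hp : (⟨mplexVal t, hv⟩ : Fin n) = binaryIndex hn fun j => t (Sum.inl j) :=
    Fin.ext (val_binaryIndex hn t).symm
  rw [mplexFun, dif_pos hv, hp]
  funext x
  rcases x with j | p | z
  · simp [muxFun, swap_apply_of_ne_of_ne]
  · by_cases h : p = binaryIndex hn fun j => t (Sum.inl j)
    · simp [muxFun, h]
    · simp [muxFun, h, swap_apply_of_ne_of_ne]
  · simp [muxFun, Subsingleton.elim z 0]

noncomputable def multiplexCircuit (hn : 2 ^ Nat.clog 2 n = n) : List (Gate (MIdx n ⊕ Fin 0)) :=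
  (muxGates (Sum.inl ∘ Sum.inl) (Sum.inl ∘ fun v => Sum.inr (Sum.inl (binaryIndex hn v)))
    (Sum.inl (Sum.inr (Sum.inr 0)))).map Gate.ofFun

lemma valid_of_mem_multiplexCircuit (hn : 2 ^ Nat.clog 2 n = n) :
    ∀ g ∈ multiplexCircuit hn, g.Valid 3 := by
  simp only [multiplexCircuit, List.mem_map]
  rintro g ⟨f, hf, rfl⟩
  exact Gate.valid_ofFun (isLocalInvolution_of_mem_muxGates (by simp) f hf)

lemma magicCount_multiplexCircuit (hn : 2 ^ Nat.clog 2 n = n) :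
    magicCount (multiplexCircuit hn) + 1 = 2 * n := by
  rw [multiplexCircuit, magicCount_map_ofFun, length_muxGates, pow_succ, hn, mul_comm]

lemma implementsExactly_multiplexCircuit (hn : 2 ^ Nat.clog 2 n = n) :
    ImplementsExactly (multiplexCircuit hn) (multiplexMat n) := by
  have hca : ∀ j v, (Sum.inl j : MIdx n) ≠ Sum.inr (Sum.inl (binaryIndex hn v)) := by simp
  have hct : ∀ j, (Sum.inl j : MIdx n) ≠ Sum.inr (Sum.inr 0) := by simp
  change ImplementsExactly _ (permMat mplexFun)
  rw [mplexFun_eq_muxFun hn]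
  refine implementsExactly_of_circUnitary_eq (muxFun_involutive hca hct) ?_
  rw [multiplexCircuit, circUnitary_map_ofFun, composeAll_muxGates (by simp) (by simp)
    (Sum.inl_injective.comp fun _ _ h => binaryIndex_injective hn (by simpa using h)) (by simp)]
  exact congrArg permMat (funext (muxFun_sumInl _ _ _))

end MultiplexMat

/-- There is a constant `K > 0` such that for every `n` a power of
two, `Multiplex_n` is implemented exactly by a unitary Clifford+Magic circuit (with
ancillas initialized in and returned to `|0⟩`) whose magic gates act on at most `3`
qubits and number at most `K · n`; that is, `M^unitary_{0,3}(Multiplex_n) = O(n)`. -/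
theorem multiplex_magic_unitary_upper_bound :
    ∃ K : ℝ, 0 < K ∧ ∀ n : ℕ, (∃ k : ℕ, n = 2 ^ k) →
      ∃ (a : ℕ) (gates : List (Gate (MIdx n ⊕ Fin a))),
        (∀ g ∈ gates, g.Valid 3) ∧
        ((magicCount gates : ℝ) ≤ K * (n : ℝ)) ∧
        ImplementsExactly gates (multiplexMat n) := by
  refine ⟨2, two_pos, ?_⟩
  rintro n ⟨k, rfl⟩
  have hn : 2 ^ Nat.clog 2 (2 ^ k) = 2 ^ k := by rw [Nat.clog_pow 2 k one_lt_two]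
  refine ⟨0, multiplexCircuit hn, valid_of_mem_multiplexCircuit hn, ?_,
    implementsExactly_multiplexCircuit hn⟩
  have hcount : (magicCount (multiplexCircuit hn) : ℝ) + 1 = 2 * (2 ^ k : ℕ) := by
    exact_mod_cast magicCount_multiplexCircuit hn
  linarith

end MagicComm
end

section
/- Let f : D → {0,1} be a partial Boolean function with D ⊆ {0,1}^{n_A} × {0,1}^{n_B}, and suppose f is computed with error ε < 1/2 by a unitary Clifford+Magic circuit containing no magic gates (i.e., a circuit consisting only of Clifford unitaries), with an arbitrary fixed advice state. Then there exist subsets S_A ⊆ {1,…,n_A}, S_B ⊆ {1,…,n_B} and a bit c ∈ {0,1} such that f(x,y) = (⊕_{i∈S_A} x_i) ⊕ (⊕_{j∈S_B} y_j) ⊕ c for all (x,y) ∈ D; consequently D‖(f) ≤ 2. -/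
open Matrix BigOperators

attribute [local instance] Classical.propDecidable

namespace MagicComm

variable {ι : Type} [Fintype ι] [DecidableEq ι]

/-- Concatenation of Alice's and Bob's inputs into one input string. -/
def concat {nA nB : ℕ} (x : Fin nA → Bool) (y : Fin nB → Bool) : Fin (nA + nB) → Bool :=
  Fin.append x y

/-- A deterministic simultaneous message passing protocol for the partial function `f`
(defined on `D`) in which Alice sends `cA` bits and Bob sends `cB` bits. -/
def DparProtocol {nA nB : ℕ} (D : Set ((Fin nA → Bool) × (Fin nB → Bool)))
    (f : (Fin nA → Bool) × (Fin nB → Bool) → Bool) (cA cB : ℕ) : Prop :=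
  ∃ (msgA : (Fin nA → Bool) → (Fin cA → Bool)) (msgB : (Fin nB → Bool) → (Fin cB → Bool))
    (ref : (Fin cA → Bool) → (Fin cB → Bool) → Bool),
    ∀ p ∈ D, ref (msgA p.1) (msgB p.2) = f p

/-- The deterministic simultaneous message passing complexity `D‖(f)`. -/
noncomputable def Dpar {nA nB : ℕ} (D : Set ((Fin nA → Bool) × (Fin nB → Bool)))
    (f : (Fin nA → Bool) × (Fin nB → Bool) → Bool) : ℕ :=
  sInf {c | ∃ cA cB : ℕ, cA + cB = c ∧ DparProtocol D f cA cB}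

/-- The parity `⊕_{i ∈ S} x_i` of the bits of `x` indexed by `S`. -/
noncomputable def parityOn {N : ℕ} (S : Finset (Fin N)) (x : Fin N → Bool) : Bool :=
  decide ((∑ i ∈ S, if x i then (1 : ZMod 2) else 0) = 1)

/-- A non-adaptive parity decision tree of depth `k` computing `f` on `D`: a function
`g : {0,1}^k → {0,1}` and parity functions `p₁, …, p_k` with
`f x = g (p₁ x, …, p_k x)` for all `x ∈ D`. -/
def PDTComputes {N : ℕ} (D : Set (Fin N → Bool)) (f : (Fin N → Bool) → Bool)
    (k : ℕ) : Prop :=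
  ∃ (g : (Fin k → Bool) → Bool) (S : Fin k → Finset (Fin N)),
    ∀ x ∈ D, f x = g (fun i => parityOn (S i) x)

/-- The non-adaptive parity decision tree complexity `PDT^na(f)`. -/
noncomputable def PDTna {N : ℕ} (D : Set (Fin N → Bool)) (f : (Fin N → Bool) → Bool) : ℕ :=
  sInf {k | PDTComputes D f k}

/-!
The difference `Pr[0] - Pr[1]` of the outcomes of measuring qubit `i0` of `U|x⟩|ψ⟩` is the
expectation `⟨x,ψ| U† Z_{i0} U |x,ψ⟩`. For Clifford `U`, `U† Z_{i0} U = α X^u Z^w` is again a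
Pauli operator. Its expectation in `|x⟩|ψ⟩` vanishes if `X^u` flips an input qubit, and
otherwise equals `(-1)^{w·x} β` with `β` independent of `x`. Since the error is below `1/2`,
the sign of the expectation is `(-1)^{f(x)}`; hence `f(x) = w·x ⊕ [β < 0]` on `D`, a parity
of which Alice and Bob can each send their half.
-/

lemma isPauli_pauliXZ (u w : ι → Bool) : IsPauli (pauliXZ u w) :=
  ⟨1, u, w, Or.inl rfl, (one_smul ℂ _).symm⟩

lemma finite_setOf_isPauli : {P : QMat ι | IsPauli P}.Finite := by
  have hα : ({1, -1, Complex.I, -Complex.I} : Set ℂ).Finite := Set.toFinite _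
  refine ((hα.prod (Set.finite_univ (α := (ι → Bool) × (ι → Bool)))).image
    fun t => t.1 • pauliXZ t.2.1 t.2.2).subset ?_
  rintro _ ⟨α, u, w, hα, rfl⟩
  exact ⟨(α, u, w), ⟨hα, trivial⟩, rfl⟩

lemma isClifford_one : IsClifford (1 : QMat ι) :=
  ⟨one_mem _, fun P hP => by simpa using hP⟩

lemma IsClifford.mul {A B : QMat ι} (hA : IsClifford A) (hB : IsClifford B) :
    IsClifford (A * B) := by
  refine ⟨mul_mem hA.1 hB.1, fun P hP => ?_⟩
  rw [conjTranspose_mul, show A * B * P * (Bᴴ * Aᴴ) = A * (B * P * Bᴴ) * Aᴴ by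
    simp only [Matrix.mul_assoc]]
  exact hA.2 _ (hB.2 _ hP)

lemma isClifford_circUnitary {gates : List (Gate ι)} (h : ∀ g ∈ gates, IsClifford g.mat) :
    IsClifford (circUnitary gates) :=
  List.prod_induction _ (fun _ _ => IsClifford.mul) isClifford_one (by simpa using h)

/-- Conjugation by `C` permutes the finitely many Pauli operators, so its inverse,
conjugation by `Cᴴ`, does too. -/
lemma IsClifford.isPauli_conjTranspose_mul_mul {C : QMat ι} (hC : IsClifford C) {Q : QMat ι}
    (hQ : IsPauli Q) : IsPauli (Cᴴ * Q * C) := by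
  have hCC : Cᴴ * C = 1 := Unitary.star_mul_self_of_mem hC.1
  have hback : ∀ P : QMat ι, Cᴴ * (C * P * Cᴴ) * C = P := fun P => by
    rw [show Cᴴ * (C * P * Cᴴ) * C = Cᴴ * C * P * (Cᴴ * C) by simp only [Matrix.mul_assoc],
      hCC, Matrix.one_mul, Matrix.mul_one]
  have hinj : Set.InjOn (fun P => C * P * Cᴴ) {P : QMat ι | IsPauli P} := fun P _ P' _ h => by
    simpa only [hback] using congrArg (fun M => Cᴴ * M * C) h
  obtain ⟨P, hP, rfl⟩ :=
    ((finite_setOf_isPauli.injOn_iff_bijOn_of_mapsTo hC.2).mp hinj).surjOn hQ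
  rwa [hback]

lemma star_mulVec_dotProduct_mulVec_mulVec {m n R : Type*} [Fintype m] [Fintype n]
    [CommSemiring R] [StarRing R] (U : Matrix m n R) (M : Matrix m m R) (φ : n → R) :
    star (U *ᵥ φ) ⬝ᵥ (M *ᵥ (U *ᵥ φ)) = star φ ⬝ᵥ ((Uᴴ * M * U) *ᵥ φ) := by
  rw [star_mulVec, ← dotProduct_mulVec, mulVec_mulVec, mulVec_mulVec, Matrix.mul_assoc]

lemma star_dotProduct_self_eq_sum_normSq {n : Type*} [Fintype n] (φ : n → ℂ) :
    star φ ⬝ᵥ φ = ((∑ s, Complex.normSq (φ s) : ℝ) : ℂ) := by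
  push_cast
  exact Finset.sum_congr rfl fun s _ => (Complex.normSq_eq_conj_mul_self).symm

lemma sum_normSq_mulVec_of_mem_unitaryGroup {n : Type*} [Fintype n] [DecidableEq n]
    {U : Matrix n n ℂ} (hU : U ∈ unitaryGroup n ℂ) (φ : n → ℂ) :
    ∑ s, Complex.normSq ((U *ᵥ φ) s) = ∑ s, Complex.normSq (φ s) := by
  have h := star_mulVec_dotProduct_mulVec_mulVec U 1 φ
  rw [one_mulVec, Matrix.mul_one, show Uᴴ * U = 1 from Unitary.star_mul_self_of_mem hU,
    one_mulVec, star_dotProduct_self_eq_sum_normSq, star_dotProduct_self_eq_sum_normSq] at h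
  exact_mod_cast h

lemma pauliXZ_mulVec_apply (u w : ι → Bool) (φ : (ι → Bool) → ℂ) (s : ι → Bool) :
    (pauliXZ u w *ᵥ φ) s =
      (-1 : ℂ) ^ (Finset.univ.filter fun i => w i = true ∧ xor (s i) (u i) = true).card *
        φ (fun i => xor (s i) (u i)) := by
  rw [mulVec, dotProduct, Finset.sum_eq_single (fun i => xor (s i) (u i))]
  · simp [pauliXZ]
  · intro t _ ht
    rw [pauliXZ, if_neg fun h => ht (funext fun i => by simp [congrFun h i]), zero_mul]
  · simp

lemma measProb_false_add_measProb_true (φ : (ι → Bool) → ℂ) (i0 : ι) :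
    measProb φ i0 false + measProb φ i0 true = ∑ s, Complex.normSq (φ s) := by
  rw [measProb, measProb, ← Finset.sum_add_distrib]
  exact Finset.sum_congr rfl fun s _ => by cases s i0 <;> simp

noncomputable def expectZ (φ : (ι → Bool) → ℂ) (i0 : ι) : ℝ :=
  measProb φ i0 false - measProb φ i0 true

lemma expectZ_eq_dotProduct (φ : (ι → Bool) → ℂ) (i0 : ι) :
    (expectZ φ i0 : ℂ) = star φ ⬝ᵥ (pauliXZ (fun _ => false) (· = i0) *ᵥ φ) := by
  rw [expectZ, measProb, measProb, dotProduct]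
  push_cast
  rw [← Finset.sum_sub_distrib]
  refine Finset.sum_congr rfl fun s _ => ?_
  have hcard : (Finset.univ.filter fun i => decide (i = i0) = true ∧ s i = true).card =
      if s i0 then 1 else 0 := by
    cases h : s i0 <;> simp [Finset.filter_and, Finset.filter_eq', h]
  rw [pauliXZ_mulVec_apply]
  simp only [Bool.xor_false, hcard]
  cases s i0 <;> simp [← Complex.normSq_eq_conj_mul_self]

lemma expectZ_sign_of_le_measProb {φ : (ι → Bool) → ℂ} {i0 : ι} {ε : ℝ} {b : Bool}
    (htot : measProb φ i0 false + measProb φ i0 true = 1) (hε : ε < 1 / 2)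
    (hb : 1 - ε ≤ measProb φ i0 b) :
    if b then expectZ φ i0 < 0 else 0 < expectZ φ i0 := by
  rw [expectZ]
  cases b <;> simp only [if_true, Bool.false_eq_true, if_false] <;> linarith

lemma neg_one_pow_card_filter {R : Type*} [Ring R] {N : ℕ} (S : Finset (Fin N))
    (x : Fin N → Bool) :
    (-1 : R) ^ (S.filter fun i => x i = true).card = if parityOn S x then -1 else 1 := by
  simp only [parityOn, Finset.sum_boole, decide_eq_true_eq, ZMod.natCast_eq_one_iff_odd]
  by_cases h : Odd (S.filter fun i => x i = true).card
  · simp [h, h.neg_one_pow]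
  · simp [h, (Nat.not_odd_iff_even.mp h).neg_one_pow]

lemma decide_add_eq_one (A B : ZMod 2) :
    decide (A + B = 1) = xor (decide (A = 1)) (decide (B = 1)) := by
  revert A B; decide

lemma parityOn_concat {nA nB : ℕ} (S : Finset (Fin (nA + nB))) (x : Fin nA → Bool)
    (y : Fin nB → Bool) :
    parityOn S (concat x y) =
      xor (parityOn (Finset.univ.filter fun i => Fin.castAdd nB i ∈ S) x)
        (parityOn (Finset.univ.filter fun j => Fin.natAdd nA j ∈ S) y) := by
  simp only [parityOn, Finset.sum_filter]
  rw [← Finset.univ_inter S, ← Finset.sum_ite_mem, Fin.sum_univ_add]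
  simp only [concat, Fin.append_left, Fin.append_right, Finset.univ_inter]
  exact decide_add_eq_one _ _

section InputState

variable {N a : ℕ}

lemma sum_inputState (X : Fin N → Bool) (g : (Fin a → Bool) → ℂ) :
    ∑ s, inputState X g s = ∑ v, g v := by
  rw [← (Equiv.sumArrowEquivProdArrow (Fin N) (Fin a) Bool).symm.sum_comp,
    Fintype.sum_prod_type]
  change ∑ x, ∑ v, (if x = X then g v else 0) = _
  simp

lemma sum_normSq_inputState (X : Fin N → Bool) (ψ : (Fin a → Bool) → ℂ) :
    ∑ s, Complex.normSq (inputState X ψ s) = ∑ v, Complex.normSq (ψ v) := by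
  have h := sum_inputState X fun v => (Complex.normSq (ψ v) : ℂ)
  have hterm : ∀ s, inputState X (fun v => (Complex.normSq (ψ v) : ℂ)) s =
      (Complex.normSq (inputState X ψ s) : ℂ) := fun s => by
    unfold inputState; split_ifs <;> simp
  simp only [hterm] at h
  exact_mod_cast h

lemma star_inputState_mul_pauliXZ_mulVec_of_inl_eq_true {X : Fin N → Bool}
    {ψ : (Fin a → Bool) → ℂ} {u w : Fin N ⊕ Fin a → Bool} {i1 : Fin N}
    (hi1 : u (Sum.inl i1) = true) (s : Fin N ⊕ Fin a → Bool) :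
    star (inputState X ψ) s * (pauliXZ u w *ᵥ inputState X ψ) s = 0 := by
  rw [pauliXZ_mulVec_apply, Pi.star_apply]
  unfold inputState
  split_ifs with h1 h2
  · have := (congrFun h2 i1).trans (congrFun h1 i1).symm
    simp [hi1] at this
  all_goals simp

lemma exists_star_inputState_mul_pauliXZ_mulVec_eq_of_inl_eq_false (ψ : (Fin a → Bool) → ℂ)
    {u w : Fin N ⊕ Fin a → Bool} (hu : ∀ i, u (Sum.inl i) = false) :
    ∃ g : (Fin a → Bool) → ℂ, ∀ (X : Fin N → Bool) (s : Fin N ⊕ Fin a → Bool),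
      star (inputState X ψ) s * (pauliXZ u w *ᵥ inputState X ψ) s =
        (-1 : ℂ) ^ (Finset.univ.filter fun i => w (Sum.inl i) = true ∧ X i = true).card *
          inputState X g s := by
  refine ⟨fun v => star (ψ v) *
    ((-1 : ℂ) ^ (Finset.univ.filter fun j =>
        w (Sum.inr j) = true ∧ xor (v j) (u (Sum.inr j)) = true).card *
      ψ (fun j => xor (v j) (u (Sum.inr j)))), fun X s => ?_⟩
  have hcard : (Finset.univ.filter fun i => w i = true ∧ xor (s i) (u i) = true).card =
      (Finset.univ.filter fun i => w (Sum.inl i) = true ∧ s (Sum.inl i) = true).card +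
      (Finset.univ.filter fun j =>
        w (Sum.inr j) = true ∧ xor (s (Sum.inr j)) (u (Sum.inr j)) = true).card := by
    simp only [Finset.card_filter, Fintype.sum_sum_type, hu, Bool.xor_false]
  rw [pauliXZ_mulVec_apply, Pi.star_apply, hcard]
  unfold inputState
  simp only [hu, Bool.xor_false]
  split_ifs with h
  · subst h; ring
  · simp

lemma exists_dotProduct_mulVec_inputState_eq_parity (ψ : (Fin a → Bool) → ℂ)
    {P : QMat (Fin N ⊕ Fin a)} (hP : IsPauli P) :
    ∃ (S : Finset (Fin N)) (β : ℂ), ∀ X : Fin N → Bool,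
      star (inputState X ψ) ⬝ᵥ (P *ᵥ inputState X ψ) = (if parityOn S X then -1 else 1) * β := by
  obtain ⟨α, u, w, -, rfl⟩ := hP
  refine ⟨Finset.univ.filter fun i => w (Sum.inl i) = true, ?_⟩
  have hα : ∀ X, star (inputState X ψ) ⬝ᵥ ((α • pauliXZ u w) *ᵥ inputState X ψ) =
      α * ∑ s, star (inputState X ψ) s * (pauliXZ u w *ᵥ inputState X ψ) s := fun X => by
    rw [smul_mulVec, dotProduct_smul, smul_eq_mul, dotProduct]
  simp only [hα]
  by_cases hu : ∀ i, u (Sum.inl i) = false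
  · obtain ⟨g, hg⟩ := exists_star_inputState_mul_pauliXZ_mulVec_eq_of_inl_eq_false ψ hu
    refine ⟨α * ∑ v, g v, fun X => ?_⟩
    rw [Finset.sum_congr rfl fun s _ => hg X s, ← Finset.mul_sum, sum_inputState,
      ← Finset.filter_filter, neg_one_pow_card_filter]
    ring
  · simp only [not_forall, Bool.not_eq_false] at hu
    obtain ⟨i1, hi1⟩ := hu
    refine ⟨0, fun X => ?_⟩
    rw [Finset.sum_eq_zero fun s _ => star_inputState_mul_pauliXZ_mulVec_of_inl_eq_true hi1 s,
      mul_zero, mul_zero]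

end InputState

lemma eq_xor_of_sign_eq {γ : Type*} {D : Set γ} {f π : γ → Bool} {r : γ → ℝ} {β : ℝ}
    (hr : ∀ p, r p = (if π p then -1 else 1) * β)
    (hsign : ∀ p ∈ D, if f p then r p < 0 else 0 < r p) :
    ∀ p ∈ D, f p = xor (π p) (decide (β < 0)) := by
  intro p hp
  have h := hsign p hp
  rw [hr] at h
  cases hf : f p <;> cases hπ : π p <;> simp [hf, hπ] at h ⊢ <;> linarith

lemma dpar_le_two_of_eq_parity {nA nB : ℕ} {D : Set ((Fin nA → Bool) × (Fin nB → Bool))}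
    {f : (Fin nA → Bool) × (Fin nB → Bool) → Bool} {SA : Finset (Fin nA)}
    {SB : Finset (Fin nB)} {c : Bool}
    (h : ∀ p ∈ D, f p = xor (xor (parityOn SA p.1) (parityOn SB p.2)) c) :
    Dpar D f ≤ 2 :=
  Nat.sInf_le ⟨1, 1, rfl, fun x _ => parityOn SA x, fun y _ => parityOn SB y,
    fun mA mB => xor (xor (mA 0) (mB 0)) c, fun p hp => (h p hp).symm⟩

theorem clifford_circuit_computes_parity_general {nA nB : ℕ} (hN : 0 < nA + nB)
    (D : Set ((Fin nA → Bool) × (Fin nB → Bool)))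
    (f : (Fin nA → Bool) × (Fin nB → Bool) → Bool)
    (ε : ℝ) (hε : ε < 1 / 2)
    (a : ℕ) (gates : List (Gate (Fin (nA + nB) ⊕ Fin a)))
    (ψ : (Fin a → Bool) → ℂ)
    (hcliff : ∀ g ∈ gates, IsClifford g.mat) (hψ : Normalized ψ)
    (hcomp : ∀ p ∈ D, 1 - ε ≤
      measProb ((circUnitary gates).mulVec (inputState (concat p.1 p.2) ψ))
        (Sum.inl ⟨0, hN⟩) (f p)) :
    (∃ (SA : Finset (Fin nA)) (SB : Finset (Fin nB)) (c : Bool),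
      ∀ p ∈ D, f p = xor (xor (parityOn SA p.1) (parityOn SB p.2)) c) ∧
    Dpar D f ≤ 2 := by
  set i0 : Fin (nA + nB) ⊕ Fin a := Sum.inl ⟨0, hN⟩
  set φ := fun p : (Fin nA → Bool) × (Fin nB → Bool) =>
    circUnitary gates *ᵥ inputState (concat p.1 p.2) ψ
  have hC := isClifford_circUnitary hcliff
  obtain ⟨S, β, hβ⟩ := exists_dotProduct_mulVec_inputState_eq_parity ψ
    (hC.isPauli_conjTranspose_mul_mul (isPauli_pauliXZ (fun _ => false) (· = i0)))
  have hexpect : ∀ p, expectZ (φ p) i0 =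
      (if parityOn S (concat p.1 p.2) then -1 else 1) * β.re := fun p => by
    have h := congrArg Complex.re <| (expectZ_eq_dotProduct _ _).trans <|
      (star_mulVec_dotProduct_mulVec_mulVec _ _ _).trans (hβ (concat p.1 p.2))
    split_ifs at h ⊢ <;> simpa using h
  have hsign : ∀ p ∈ D, if f p then expectZ (φ p) i0 < 0 else 0 < expectZ (φ p) i0 :=
    fun p hp => expectZ_sign_of_le_measProb (by
      rw [measProb_false_add_measProb_true, sum_normSq_mulVec_of_mem_unitaryGroup hC.1,
        sum_normSq_inputState, hψ]) hε (hcomp p hp)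
  have hpar := fun p hp => (eq_xor_of_sign_eq hexpect hsign p hp).trans (by rw [parityOn_concat])
  exact ⟨⟨_, _, _, hpar⟩, dpar_le_two_of_eq_parity hpar⟩

/-- If a partial Boolean function `f : D → {0,1}`,
`D ⊆ {0,1}^{n_A} × {0,1}^{n_B}`, is computed with error `ε < 1/2` by a unitary circuit
consisting only of Clifford gates (with an arbitrary fixed, normalized advice state),
then `f` agrees on `D` with a parity
`(⊕_{i ∈ S_A} x_i) ⊕ (⊕_{j ∈ S_B} y_j) ⊕ c`; consequently `D‖(f) ≤ 2`. -/
theorem clifford_circuit_computes_parity {nA nB : ℕ} (hN : 0 < nA + nB)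
    (D : Set ((Fin nA → Bool) × (Fin nB → Bool)))
    (f : (Fin nA → Bool) × (Fin nB → Bool) → Bool)
    (ε : ℝ) (hε0 : 0 ≤ ε) (hε : ε < 1 / 2)
    (a : ℕ) (gates : List (Gate (Fin (nA + nB) ⊕ Fin a)))
    (ψ : (Fin a → Bool) → ℂ)
    (hcliff : ∀ g ∈ gates, IsClifford g.mat) (hψ : Normalized ψ)
    (hcomp : ∀ p ∈ D, 1 - ε ≤
      measProb ((circUnitary gates).mulVec (inputState (concat p.1 p.2) ψ))
        (Sum.inl ⟨0, hN⟩) (f p)) :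
    (∃ (SA : Finset (Fin nA)) (SB : Finset (Fin nB)) (c : Bool),
      ∀ p ∈ D, f p = xor (xor (parityOn SA p.1) (parityOn SB p.2)) c) ∧
    Dpar D f ≤ 2 :=
  clifford_circuit_computes_parity_general hN D f ε hε a gates ψ hcliff hψ hcomp

end MagicComm
end

section
/- Let ε ∈ [0,1], let α ∈ [1−ε, 1], let f ∈ {0,1}, let k ∈ ℕ and let p : {0,1}^k → {0,1}. In M₂(ℂ), let e₀, e₁ denote the standard basis column vectors, let X = [[0,1],[1,0]], and set σ = α·e_f e_f^† + (1−α)·e_{1−f} e_{1−f}^†. Define the 2^{k+1} × 2^{k+1} matrices ρ = 2^{−k}·Σ_{r∈{0,1}^k} (X^{p(r)} σ X^{p(r)}) ⊗ E_{rr} and Sim = 2^{−k}·Σ_{r∈{0,1}^k} (X^{p(r)} e_f e_f^† X^{p(r)}) ⊗ E_{rr}, where E_{rr} is the 2^k × 2^k matrix with a single 1 in the (r,r) diagonal entry. Then the trace norm (sum of singular values) of ρ − Sim equals 2(1−α), and in particular ‖ρ − Sim‖₁ ≤ 2ε. -/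
open Matrix BigOperators
open scoped ComplexOrder

attribute [local instance] Classical.propDecidable

namespace MagicComm

/-- The trace norm `‖A‖₁ = Tr √(AᴴA)` of a complex square matrix (the sum of the
singular values of `A`). -/
noncomputable def traceNorm {n : Type} [Fintype n] [DecidableEq n] (A : Matrix n n ℂ) : ℝ :=
  (((Matrix.posSemidef_conjTranspose_mul_self A).1.eigenvectorUnitary.1 *
      diagonal (fun i => ((Real.sqrt
        ((Matrix.posSemidef_conjTranspose_mul_self A).1.eigenvalues i) : ℝ) : ℂ)) *
      (star (Matrix.posSemidef_conjTranspose_mul_self A).1.eigenvectorUnitary :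
        Matrix n n ℂ))).trace.re

/-- The Kronecker product `A ⊗ B` on a product of registers. -/
noncomputable def kron2 {P Q P' Q' : Type} (A : Matrix P P' ℂ) (B : Matrix Q Q' ℂ) :
    Matrix (P × Q) (P' × Q') ℂ := fun p q => A p.1 q.1 * B p.2 q.2

/-- The rank-one projector `e_b e_b†` onto a standard basis vector of `ℂ²`. -/
noncomputable def basMat (b : Bool) : Matrix Bool Bool ℂ := fun i j =>
  if i = b ∧ j = b then 1 else 0

/-- The Pauli matrix `X = [[0,1],[1,0]]`. -/
noncomputable def Xmat : Matrix Bool Bool ℂ := fun i j => if i = j then 0 else 1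

/-- `X^0 = I`, `X^1 = X`. -/
noncomputable def Xpow : Bool → Matrix Bool Bool ℂ
  | false => 1
  | true => Xmat

/-! Conjugating by `X^{p(r)}` only relabels the basis, so `ρ - Sim` is block diagonal with blocks
`2^{-k} (1 - α) X^{p(r)} (e_{1-f} e_{1-f}† - e_f e_f†) X^{p(r)}`, i.e. it is the diagonal matrix
whose `2^{k+1}` entries are all `±(1 - α) / 2^k`. The trace norm of a diagonal matrix is the sum
of the moduli of its entries, which gives `2 (1 - α)`, and `1 - α ≤ ε`. -/

lemma sum_kron2_single {ι m n : Type} [Fintype ι] [DecidableEq ι] (M : ι → Matrix m n ℂ) :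
    ∑ r, kron2 (M r) (single r r (1 : ℂ)) = blockDiagonal M := by
  ext ⟨i, r⟩ ⟨j, r'⟩
  simp [kron2, Matrix.sum_apply, blockDiagonal_apply, single_apply, ite_and, eq_comm]

lemma Xpow_mul_basMat_mul_Xpow (q g : Bool) :
    Xpow q * basMat g * Xpow q = basMat (xor g q) := by
  ext i j
  cases q <;> cases g <;> cases i <;> cases j <;> simp [Xpow, Xmat, basMat, Matrix.mul_apply]

lemma basMat_eq_diagonal (b : Bool) : basMat b = diagonal (fun i => if i = b then 1 else 0) := by
  ext i j
  cases i <;> cases j <;> cases b <;> simp [basMat]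

lemma Xpow_conj_sigma_sub_conj_basMat (α : ℝ) (f q : Bool) :
    Xpow q * ((α : ℂ) • basMat f + ((1 - α : ℝ) : ℂ) • basMat (!f)) * Xpow q
      - Xpow q * basMat f * Xpow q =
      diagonal (fun b => if b = xor f q then -((1 - α : ℝ) : ℂ) else ((1 - α : ℝ) : ℂ)) := by
  rw [mul_add, add_mul, mul_smul_comm, mul_smul_comm, smul_mul_assoc, smul_mul_assoc,
    Xpow_mul_basMat_mul_Xpow, Xpow_mul_basMat_mul_Xpow, basMat_eq_diagonal, basMat_eq_diagonal]
  ext i j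
  by_cases h : i = j
  · subst h
    cases i <;> cases f <;> cases q <;> simp
  · simp [h]

section TraceNorm

variable {n : Type} [Fintype n] [DecidableEq n]

/- `traceNorm A` is the trace of `√(AᴴA)` computed by the continuous functional calculus, and
`CFC.sqrt` picks out the unique positive semidefinite square root. -/
lemma traceNorm_eq_re_trace_of_sq_eq {A B : Matrix n n ℂ} (hB : B.PosSemidef)
    (h : B ^ 2 = Aᴴ * A) : traceNorm A = B.trace.re := by
  have hA := posSemidef_conjTranspose_mul_self A
  have hcfc : hA.1.eigenvectorUnitary.1 *
      diagonal (fun i => ((Real.sqrt (hA.1.eigenvalues i) : ℝ) : ℂ)) *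
      (star hA.1.eigenvectorUnitary : Matrix n n ℂ) = hA.1.cfc Real.sqrt := by
    simp [IsHermitian.cfc, Unitary.conjStarAlgAut_apply, Function.comp_def]
  open scoped MatrixOrder in
  rw [traceNorm, hcfc, ← hA.1.cfc_eq, ← cfcₙ_eq_cfc,
    ← CFC.sqrt_eq_real_sqrt _ (nonneg_iff_posSemidef.mpr hA), ← h,
    CFC.sqrt_sq B (nonneg_iff_posSemidef.mpr hB)]

lemma traceNorm_diagonal (d : n → ℂ) : traceNorm (diagonal d) = ∑ i, ‖d i‖ := by
  have hB : (diagonal fun i => (‖d i‖ : ℂ)).PosSemidef :=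
    posSemidef_diagonal_iff.mpr fun i => by positivity
  rw [traceNorm_eq_re_trace_of_sq_eq hB, trace_diagonal, Complex.re_sum]
  · simp
  · rw [diagonal_conjTranspose, diagonal_mul_diagonal, sq, diagonal_mul_diagonal]
    congr 1
    ext i
    simp only [Pi.star_apply, Complex.star_def]
    rw [Complex.conj_mul', sq]

lemma traceNorm_diagonal_of_forall_norm_eq {d : n → ℂ} {c : ℝ} (h : ∀ i, ‖d i‖ = c) :
    traceNorm (diagonal d) = Fintype.card n * c := by
  simp [traceNorm_diagonal, h]

end TraceNorm

theorem simulator_trace_distance_general (ε α : ℝ)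
    (hα1 : 1 - ε ≤ α) (hα2 : α ≤ 1) (f : Bool) (k : ℕ) (p : (Fin k → Bool) → Bool) :
    traceNorm
        ((((2 : ℂ) ^ k)⁻¹ •
          ∑ r : Fin k → Bool,
            kron2 (Xpow (p r) * ((α : ℂ) • basMat f + (((1 - α : ℝ)) : ℂ) • basMat (!f)) *
                Xpow (p r))
              (Matrix.single r r (1 : ℂ))) -
          ((2 : ℂ) ^ k)⁻¹ •
          ∑ r : Fin k → Bool,
            kron2 (Xpow (p r) * basMat f * Xpow (p r))
              (Matrix.single r r (1 : ℂ))) =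
      2 * (1 - α) ∧
    traceNorm
        ((((2 : ℂ) ^ k)⁻¹ •
          ∑ r : Fin k → Bool,
            kron2 (Xpow (p r) * ((α : ℂ) • basMat f + (((1 - α : ℝ)) : ℂ) • basMat (!f)) *
                Xpow (p r))
              (Matrix.single r r (1 : ℂ))) -
          ((2 : ℂ) ^ k)⁻¹ •
          ∑ r : Fin k → Bool,
            kron2 (Xpow (p r) * basMat f * Xpow (p r))
              (Matrix.single r r (1 : ℂ))) ≤
      2 * ε := by
  suffices h : traceNorm _ = 2 * (1 - α) from ⟨h, h.trans_le (by linarith)⟩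
  have hnorm : ‖((1 - α : ℝ) : ℂ)‖ = 1 - α := by
    rw [Complex.norm_real, Real.norm_of_nonneg (sub_nonneg.mpr hα2)]
  rw [sum_kron2_single, sum_kron2_single, ← smul_sub, ← blockDiagonal_sub, Pi.sub_def]
  simp only [Xpow_conj_sigma_sub_conj_basMat, blockDiagonal_diagonal, ← diagonal_smul]
  rw [traceNorm_diagonal_of_forall_norm_eq (c := (1 - α) / 2 ^ k) fun i => ?_]
  · simp only [Fintype.card_prod, Fintype.card_fun, Fintype.card_bool, Fintype.card_fin]
    push_cast
    field_simp
  · rw [Pi.smul_apply, smul_eq_mul, norm_mul, apply_ite norm, norm_neg, ite_self, hnorm]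
    simp [div_eq_inv_mul]

/-- Let `ε ∈ [0,1]`, `α ∈ [1-ε, 1]`, `f ∈ {0,1}`, and
`p : {0,1}^k → {0,1}`.  With `σ = α e_f e_f† + (1-α) e_{1-f} e_{1-f}†`,
`ρ = 2^{-k} Σ_r (X^{p(r)} σ X^{p(r)}) ⊗ E_{rr}` and
`Sim = 2^{-k} Σ_r (X^{p(r)} e_f e_f† X^{p(r)}) ⊗ E_{rr}`, the trace norm of `ρ - Sim`
equals `2 (1 - α)`; in particular `‖ρ - Sim‖₁ ≤ 2 ε`. -/
theorem simulator_trace_distance (ε α : ℝ) (hε0 : 0 ≤ ε) (hε1 : ε ≤ 1)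
    (hα1 : 1 - ε ≤ α) (hα2 : α ≤ 1) (f : Bool) (k : ℕ) (p : (Fin k → Bool) → Bool) :
    traceNorm
        ((((2 : ℂ) ^ k)⁻¹ •
          ∑ r : Fin k → Bool,
            kron2 (Xpow (p r) * ((α : ℂ) • basMat f + (((1 - α : ℝ)) : ℂ) • basMat (!f)) *
                Xpow (p r))
              (Matrix.single r r (1 : ℂ))) -
          ((2 : ℂ) ^ k)⁻¹ •
          ∑ r : Fin k → Bool,
            kron2 (Xpow (p r) * basMat f * Xpow (p r))
              (Matrix.single r r (1 : ℂ))) =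
      2 * (1 - α) ∧
    traceNorm
        ((((2 : ℂ) ^ k)⁻¹ •
          ∑ r : Fin k → Bool,
            kron2 (Xpow (p r) * ((α : ℂ) • basMat f + (((1 - α : ℝ)) : ℂ) • basMat (!f)) *
                Xpow (p r))
              (Matrix.single r r (1 : ℂ))) -
          ((2 : ℂ) ^ k)⁻¹ •
          ∑ r : Fin k → Bool,
            kron2 (Xpow (p r) * basMat f * Xpow (p r))
              (Matrix.single r r (1 : ℂ))) ≤
      2 * ε :=
  simulator_trace_distance_general ε α hα1 hα2 f k p

end MagicComm
end
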